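/- (Uniqueness of categorified idempotents) Let 𝒞 be a monoidal preadditive category for which ℤ-indexed cochain complexes over 𝒞 carry the induced monoidal structure. Let ι : 𝟙 ⟶ P and ι' : 𝟙 ⟶ P' be chain maps from the unit complex such that P' ⊗ Cone(ι) is contractible and Cone(ι') ⊗ P is contractible. Then P and P' are homotopy equivalent. -/

import Mathlib

/-!
Tensoring the degreewise split sequence `B ⟶ Cone(φ) ⟶ A⟦1⟧` with a complex `Q` (on either side)
keeps it degreewise split, so it yields a distinguished triangle
`B ⊗ Q ⟶ Cone(φ) ⊗ Q ⟶ A⟦1⟧ ⊗ Q ⟶ (B ⊗ Q)⟦1⟧` in the homotopy category. If `Cone(φ) ⊗ Q` is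
contractible, the third morphism is an isomorphism, and cancelling the shift gives
`A ⊗ Q ≅ B ⊗ Q` up to homotopy. Applied to `ι' ▷ P` and `P' ◁ ι` this gives
`P ≅ 𝟙 ⊗ P ≅ P' ⊗ P ≅ P' ⊗ 𝟙 ≅ P'`.
-/

open CategoryTheory CategoryTheory.Limits MonoidalCategory CochainComplex HomologicalComplex

namespace HomotopyCategory

open Pretriangulated

variable {C : Type*} [Category C] [Preadditive C] [HasZeroObject C] [HasBinaryBiproducts C]

lemma nonempty_iso_of_degreewiseSplit (S : ShortComplex (CochainComplex C ℤ))
    (σ : ∀ n, (S.map (eval C (ComplexShape.up ℤ) n)).Splitting) (hS : Homotopy (𝟙 S.X₂) 0)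
    {X : CochainComplex C ℤ} (e : S.X₃ ≅ X⟦(1 : ℤ)⟧) :
    Nonempty ((quotient C _).obj X ≅ (quotient C _).obj S.X₁) := by
  have hT : trianglehOfDegreewiseSplit S σ ∈ distTriang _ :=
    (distinguished_iff_iso_trianglehOfDegreewiseSplit _).2 ⟨S, σ, ⟨Iso.refl _⟩⟩
  have : IsIso (trianglehOfDegreewiseSplit S σ).mor₃ :=
    (Triangle.isZero₂_iff_isIso₃ _ hT).1 ((isZero_quotient_obj_iff _).2 ⟨hS⟩)
  exact ⟨(CategoryTheory.shiftFunctor _ (1 : ℤ)).preimageIso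
    (((quotient C _).commShiftIso (1 : ℤ)).symm.app X ≪≫ (quotient C _).mapIso e.symm ≪≫
      @asIso _ _ _ _ (trianglehOfDegreewiseSplit S σ).mor₃ this)⟩

end HomotopyCategory

namespace CochainComplex

variable {C₁ C₂ D : Type*} [Category C₁] [Category C₂] [Category D] [Preadditive D]

section MapBifunctor₁

variable [Preadditive C₁] [HasZeroMorphisms C₂] (F : C₁ ⥤ C₂ ⥤ D) [F.Additive]
  [∀ X₁, (F.obj X₁).PreservesZeroMorphisms] (S : ShortComplex (CochainComplex C₁ ℤ))
  (K₂ : CochainComplex C₂ ℤ) [HasMapBifunctor S.X₁ K₂ F] [HasMapBifunctor S.X₂ K₂ F]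
  [HasMapBifunctor S.X₃ K₂ F]

noncomputable def mapBifunctorShortComplex₁ : ShortComplex (CochainComplex D ℤ) :=
  ShortComplex.mk (mapBifunctorMap S.f (𝟙 K₂) F (.up ℤ)) (mapBifunctorMap S.g (𝟙 K₂) F (.up ℤ)) (by
    ext n p q h : 3
    simp [ι_mapBifunctorMap_assoc]
    rw [← NatTrans.comp_app_assoc, ← F.map_comp, ← HomologicalComplex.comp_f, S.zero]
    simp)

variable {S} in
noncomputable def mapBifunctorShortComplex₁Splitting
    (σ : ∀ n, (S.map (eval C₁ (ComplexShape.up ℤ) n)).Splitting) (n : ℤ) :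
    ((mapBifunctorShortComplex₁ F S K₂).map (eval D (ComplexShape.up ℤ) n)).Splitting :=
  -- Retyping the components of `σ` through `S.Xᵢ.X p` rather than `(S.map (eval _ _ p)).Xᵢ`
  -- lets the `ι_mapBifunctorMap` lemmas match syntactically.
  let r p : S.X₂.X p ⟶ S.X₁.X p := (σ p).r
  let s p : S.X₃.X p ⟶ S.X₂.X p := (σ p).s
  let r' : (mapBifunctor S.X₂ K₂ F).X n ⟶ (mapBifunctor S.X₁ K₂ F).X n :=
    mapBifunctorDesc (fun p q h => (F.map (r p)).app (K₂.X q) ≫ ιMapBifunctor S.X₁ K₂ F p q n h)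
  let s' : (mapBifunctor S.X₃ K₂ F).X n ⟶ (mapBifunctor S.X₂ K₂ F).X n :=
    mapBifunctorDesc (fun p q h => (F.map (s p)).app (K₂.X q) ≫ ιMapBifunctor S.X₂ K₂ F p q n h)
  let f := (mapBifunctorMap S.f (𝟙 K₂) F (.up ℤ)).f n
  let g := (mapBifunctorMap S.g (𝟙 K₂) F (.up ℤ)).f n
  { r := r'
    s := s'
    f_r := by
      change f ≫ r' = 𝟙 _
      refine HomologicalComplex.mapBifunctor.hom_ext (fun p q h => ?_)
      have : S.f.f p ≫ r p = 𝟙 _ := (σ p).f_r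
      simp [f, r', ι_mapBifunctorMap_assoc, ← NatTrans.comp_app_assoc, ← F.map_comp, this]
    s_g := by
      change s' ≫ g = 𝟙 _
      refine HomologicalComplex.mapBifunctor.hom_ext (fun p q h => ?_)
      have : s p ≫ S.g.f p = 𝟙 _ := (σ p).s_g
      simp [g, s', ι_mapBifunctorMap, ← NatTrans.comp_app_assoc, ← F.map_comp, this]
    id := by
      change r' ≫ f + g ≫ s' = 𝟙 _
      refine HomologicalComplex.mapBifunctor.hom_ext (fun p q h => ?_)
      have hid : r p ≫ S.f.f p + S.g.f p ≫ s p = 𝟙 _ := (σ p).id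
      have : (F.map (r p)).app (K₂.X q) ≫ (F.map (S.f.f p)).app (K₂.X q) +
          (F.map (S.g.f p)).app (K₂.X q) ≫ (F.map (s p)).app (K₂.X q) = 𝟙 _ := by
        rw [← NatTrans.comp_app, ← NatTrans.comp_app, ← NatTrans.app_add, ← F.map_comp,
          ← F.map_comp, ← F.map_add, hid, F.map_id, NatTrans.id_app]
      simp [f, g, r', s', ι_mapBifunctorMap_assoc]
      rw [← Category.assoc, ← Category.assoc, ← Preadditive.add_comp, this, Category.id_comp] }

end MapBifunctor₁

section MapBifunctor₂

variable [HasZeroMorphisms C₁] [Preadditive C₂] (F : C₁ ⥤ C₂ ⥤ D) [F.PreservesZeroMorphisms]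
  [∀ X₁, (F.obj X₁).Additive] (K₁ : CochainComplex C₁ ℤ) (S : ShortComplex (CochainComplex C₂ ℤ))
  [HasMapBifunctor K₁ S.X₁ F] [HasMapBifunctor K₁ S.X₂ F] [HasMapBifunctor K₁ S.X₃ F]

noncomputable def mapBifunctorShortComplex₂ : ShortComplex (CochainComplex D ℤ) :=
  ShortComplex.mk (mapBifunctorMap (𝟙 K₁) S.f F (.up ℤ)) (mapBifunctorMap (𝟙 K₁) S.g F (.up ℤ)) (by
    ext n p q h : 3
    simp [ι_mapBifunctorMap_assoc]
    rw [← Functor.map_comp_assoc, ← HomologicalComplex.comp_f, S.zero]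
    simp)

variable {S} in
noncomputable def mapBifunctorShortComplex₂Splitting
    (σ : ∀ n, (S.map (eval C₂ (ComplexShape.up ℤ) n)).Splitting) (n : ℤ) :
    ((mapBifunctorShortComplex₂ F K₁ S).map (eval D (ComplexShape.up ℤ) n)).Splitting :=
  let r q : S.X₂.X q ⟶ S.X₁.X q := (σ q).r
  let s q : S.X₃.X q ⟶ S.X₂.X q := (σ q).s
  let r' : (mapBifunctor K₁ S.X₂ F).X n ⟶ (mapBifunctor K₁ S.X₁ F).X n :=
    mapBifunctorDesc (fun p q h => (F.obj (K₁.X p)).map (r q) ≫ ιMapBifunctor K₁ S.X₁ F p q n h)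
  let s' : (mapBifunctor K₁ S.X₃ F).X n ⟶ (mapBifunctor K₁ S.X₂ F).X n :=
    mapBifunctorDesc (fun p q h => (F.obj (K₁.X p)).map (s q) ≫ ιMapBifunctor K₁ S.X₂ F p q n h)
  let f := (mapBifunctorMap (𝟙 K₁) S.f F (.up ℤ)).f n
  let g := (mapBifunctorMap (𝟙 K₁) S.g F (.up ℤ)).f n
  { r := r'
    s := s'
    f_r := by
      change f ≫ r' = 𝟙 _
      refine HomologicalComplex.mapBifunctor.hom_ext (fun p q h => ?_)
      have : S.f.f q ≫ r q = 𝟙 _ := (σ q).f_r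
      simp [f, r', ι_mapBifunctorMap_assoc, ← Functor.map_comp_assoc, this]
    s_g := by
      change s' ≫ g = 𝟙 _
      refine HomologicalComplex.mapBifunctor.hom_ext (fun p q h => ?_)
      have : s q ≫ S.g.f q = 𝟙 _ := (σ q).s_g
      simp [g, s', ι_mapBifunctorMap, ← Functor.map_comp_assoc, this]
    id := by
      change r' ≫ f + g ≫ s' = 𝟙 _
      refine HomologicalComplex.mapBifunctor.hom_ext (fun p q h => ?_)
      have hid : r q ≫ S.f.f q + S.g.f q ≫ s q = 𝟙 _ := (σ q).id
      have : (F.obj (K₁.X p)).map (r q) ≫ (F.obj (K₁.X p)).map (S.f.f q) +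
          (F.obj (K₁.X p)).map (S.g.f q) ≫ (F.obj (K₁.X p)).map (s q) = 𝟙 _ := by
        rw [← Functor.map_comp, ← Functor.map_comp, ← Functor.map_add, hid,
          CategoryTheory.Functor.map_id]
      simp [f, g, r', s', ι_mapBifunctorMap_assoc]
      rw [← Category.assoc, ← Category.assoc, ← Preadditive.add_comp, this, Category.id_comp] }

end MapBifunctor₂

variable [HasZeroObject D] [HasBinaryBiproducts D]

lemma nonempty_iso_mapBifunctor₁_of_homotopy_mappingCone [Preadditive C₁] [HasBinaryBiproducts C₁]
    [HasZeroMorphisms C₂] (F : C₁ ⥤ C₂ ⥤ D) [F.Additive] [∀ X₁, (F.obj X₁).PreservesZeroMorphisms]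
    {A B : CochainComplex C₁ ℤ} (φ : A ⟶ B) (K₂ : CochainComplex C₂ ℤ)
    [∀ K₁ : CochainComplex C₁ ℤ, HasMapBifunctor K₁ K₂ F]
    (h : Homotopy (𝟙 (mapBifunctor (mappingCone φ) K₂ F)) 0) :
    Nonempty ((HomotopyCategory.quotient D _).obj (mapBifunctor A K₂ F) ≅
      (HomotopyCategory.quotient D _).obj (mapBifunctor B K₂ F)) :=
  HomotopyCategory.nonempty_iso_of_degreewiseSplit _
    (mapBifunctorShortComplex₁Splitting F K₂ (mappingCone.triangleRotateShortComplexSplitting φ)) h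
    (mapBifunctorShift₁Iso A K₂ F 1)

lemma nonempty_iso_mapBifunctor₂_of_homotopy_mappingCone [HasZeroMorphisms C₁] [Preadditive C₂]
    [HasBinaryBiproducts C₂] (F : C₁ ⥤ C₂ ⥤ D) [F.PreservesZeroMorphisms]
    [∀ X₁, (F.obj X₁).Additive] (K₁ : CochainComplex C₁ ℤ) {A B : CochainComplex C₂ ℤ} (φ : A ⟶ B)
    [∀ K₂ : CochainComplex C₂ ℤ, HasMapBifunctor K₁ K₂ F]
    (h : Homotopy (𝟙 (mapBifunctor K₁ (mappingCone φ) F)) 0) :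
    Nonempty ((HomotopyCategory.quotient D _).obj (mapBifunctor K₁ A F) ≅
      (HomotopyCategory.quotient D _).obj (mapBifunctor K₁ B F)) :=
  HomotopyCategory.nonempty_iso_of_degreewiseSplit _
    (mapBifunctorShortComplex₂Splitting F K₁ (mappingCone.triangleRotateShortComplexSplitting φ)) h
    (mapBifunctorShift₂Iso K₁ A F 1)

end CochainComplex

theorem categorified_idempotents_unique
    {C : Type*} [Category C] [MonoidalCategory C] [Preadditive C] [HasZeroObject C]
    [HasBinaryBiproducts C]
    [(curriedTensor C).Additive] [∀ (X₁ : C), ((curriedTensor C).obj X₁).Additive]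
    [∀ (X₁ X₂ : GradedObject ℤ C), GradedObject.HasTensor X₁ X₂]
    [∀ X₂, PreservesColimit (Functor.empty.{0} C) ((curriedTensor C).flip.obj X₂)]
    [∀ (X₁ X₂ X₃ : GradedObject ℤ C), GradedObject.HasGoodTensor₁₂Tensor X₁ X₂ X₃]
    [∀ (X₁ X₂ X₃ : GradedObject ℤ C), GradedObject.HasGoodTensorTensor₂₃ X₁ X₂ X₃]
    (P P' : CochainComplex C ℤ)
    (ι : 𝟙_ (CochainComplex C ℤ) ⟶ P) (ι' : 𝟙_ (CochainComplex C ℤ) ⟶ P')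
    (h₁ : Nonempty (Homotopy (𝟙 (P' ⊗ mappingCone ι)) 0))
    (h₂ : Nonempty (Homotopy (𝟙 (mappingCone ι' ⊗ P)) 0)) :
    Nonempty (HomotopyEquiv P P') := by
  obtain ⟨h₁⟩ := h₁
  obtain ⟨h₂⟩ := h₂
  obtain ⟨e₁⟩ := nonempty_iso_mapBifunctor₁_of_homotopy_mappingCone (curriedTensor C) ι' P h₂
  obtain ⟨e₂⟩ := nonempty_iso_mapBifunctor₂_of_homotopy_mappingCone (curriedTensor C) P' ι h₁
  let π := HomotopyCategory.quotient C (ComplexShape.up ℤ)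
  exact ⟨HomotopyCategory.homotopyEquivOfIso
    ((π.mapIso (λ_ P)).symm ≪≫ e₁ ≪≫ e₂.symm ≪≫ π.mapIso (ρ_ P'))⟩
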